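/- Let $(B,\|\cdot\|)$ be a Banach space and let $Q^0_t:B\to B$, $t\in(0,1]$, be linear operators satisfying $\|Q^0_t f\|\le C_3 t^{-1} r_t^{\varepsilon_0}\|f\|$ for some constants $C_3,\varepsilon_0>0$ and a non-negative non-decreasing function $r$ with $r_{\lambda t}\le\sqrt{\lambda}\,r_t$. Define inductively $Q^n_t f = \int_0^t Q^0_{t-s} Q^{n-1}_s f\,ds$ (Bochner integral), with $Q^0$ the given family. Then for all $n\in\mathbb{N}$, $t\in(0,1]$ and $f\in B$, $\|Q^n_t f\|\le C_3^{n+1}\prod_{k=1}^n B\big(\tfrac{\varepsilon_0}{2},\tfrac{k\varepsilon_0}{2}\big)\, t^{-1} r_t^{(n+1)\varepsilon_0}\,\|f\|$, where $B(a,b)$ is the Beta function. -/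

import Mathlib

/-!
Induction on `n`, with weights `w_p(t) = t⁻¹ r_t^p`. For `u ≤ t` the scaling property gives
`r_u^p ≤ (u/t)^(p/2) r_t^p`, so the integrand `Q⁰_{t-s} Qⁿ_s f` is bounded by a multiple of
`t^(-(p+q)/2) r_t^(p+q) s^(q/2-1) (t-s)^(p/2-1)`. Integrating this Beta kernel over `(0,t)`
gives `t^((p+q)/2-1) B(p/2, q/2)`, which supplies the new Beta factor and restores the weight
`t⁻¹ r_t^(p+q)`.
-/

open MeasureTheory Set

noncomputable def Beta (a b : ℝ) : ℝ := ∫ u in (0:ℝ)..1, u ^ (a - 1) * (1 - u) ^ (b - 1)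

lemma intervalIntegrable_Beta_integrand {a b : ℝ} (ha : 0 < a) (hb : 0 < b) :
    IntervalIntegrable (fun u : ℝ => u ^ (a - 1) * (1 - u) ^ (b - 1)) volume 0 1 := by
  have hN := (Complex.betaIntegral_convergent (u := a) (v := b) (by simpa) (by simpa)).norm
  rw [intervalIntegrable_iff_integrableOn_Ioo_of_le zero_le_one] at hN ⊢
  refine hN.congr_fun (fun u ⟨hu0, hu1⟩ => ?_) measurableSet_Ioo
  have h1u : 1 - (u : ℂ) = ((1 - u : ℝ) : ℂ) := by push_cast; ring
  dsimp only
  rw [norm_mul, h1u, Complex.norm_cpow_eq_rpow_re_of_pos hu0,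
    Complex.norm_cpow_eq_rpow_re_of_pos (by linarith)]
  norm_num

lemma Beta_nonneg (a b : ℝ) : 0 ≤ Beta a b :=
  intervalIntegral.integral_nonneg zero_le_one fun u ⟨hu0, hu1⟩ => by
    have : 0 ≤ 1 - u := by linarith
    positivity

lemma Beta_comm (a b : ℝ) : Beta a b = Beta b a := by
  simpa [Beta, mul_comm] using
    intervalIntegral.integral_comp_sub_left (fun u : ℝ => u ^ (b - 1) * (1 - u) ^ (a - 1)) 1
      (a := 0) (b := 1)

lemma rpow_mul_rpow_sub_eq_rescale {t x : ℝ} (a b : ℝ) (ht : 0 < t) (hx : 0 ≤ x)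
    (hxt : x ≤ t) :
    x ^ (a - 1) * (t - x) ^ (b - 1)
      = t ^ (a + b - 2) * ((x / t) ^ (a - 1) * (1 - x / t) ^ (b - 1)) := by
  have h1 : 1 - x / t = (t - x) / t := by field_simp
  have h2 : t ^ (a + b - 2) = t ^ (a - 1) * t ^ (b - 1) := by
    rw [← Real.rpow_add ht]; ring_nf
  rw [h1, Real.div_rpow hx ht.le, Real.div_rpow (by linarith) ht.le, h2]
  have : t ^ (a - 1) ≠ 0 := (Real.rpow_pos_of_pos ht _).ne'
  have : t ^ (b - 1) ≠ 0 := (Real.rpow_pos_of_pos ht _).ne'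
  field_simp

lemma intervalIntegrable_rpow_mul_rpow_sub {t a b : ℝ} (ht : 0 < t) (ha : 0 < a) (hb : 0 < b) :
    IntervalIntegrable (fun s : ℝ => s ^ (a - 1) * (t - s) ^ (b - 1)) volume 0 t := by
  have h := ((intervalIntegrable_Beta_integrand ha hb).comp_mul_left (c := t⁻¹)).const_mul
    (t ^ (a + b - 2))
  simp only [zero_div, one_div, inv_inv] at h
  rw [intervalIntegrable_iff_integrableOn_Icc_of_le ht.le] at h ⊢
  refine h.congr_fun (fun s ⟨hs0, hst⟩ => ?_) measurableSet_Icc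
  simp only [rpow_mul_rpow_sub_eq_rescale a b ht hs0 hst, inv_mul_eq_div]

lemma integral_rpow_mul_rpow_sub {t : ℝ} (a b : ℝ) (ht : 0 < t) :
    ∫ s in (0 : ℝ)..t, s ^ (a - 1) * (t - s) ^ (b - 1) = t ^ (a + b - 1) * Beta a b := by
  have h := intervalIntegral.integral_comp_mul_left
    (fun s : ℝ => s ^ (a - 1) * (t - s) ^ (b - 1)) ht.ne' (a := 0) (b := 1)
  simp only [mul_zero, mul_one] at h
  have hBeta : ∫ u in (0 : ℝ)..1, (t * u) ^ (a - 1) * (t - t * u) ^ (b - 1)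
      = t ^ (a + b - 2) * Beta a b := by
    rw [Beta, ← intervalIntegral.integral_const_mul]
    refine intervalIntegral.integral_congr fun u hu => ?_
    rw [uIcc_of_le zero_le_one] at hu
    have htu : t * u ≤ t := mul_le_of_le_one_right ht.le hu.2
    simp only [rpow_mul_rpow_sub_eq_rescale a b ht (by nlinarith [hu.1]) htu,
      mul_div_cancel_left₀ u ht.ne']
  rw [hBeta, smul_eq_mul] at h
  rw [← mul_inv_cancel_left₀ ht.ne' (∫ s in (0 : ℝ)..t, _), ← h,
    show a + b - 1 = 1 + (a + b - 2) by ring, Real.rpow_add ht, Real.rpow_one, mul_assoc]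

lemma norm_setIntegral_Ioo_le_of_norm_le_kernel {E : Type*} [NormedAddCommGroup E]
    [NormedSpace ℝ E] {F : ℝ → E} {K t a b : ℝ} (ht : 0 < t) (ha : 0 < a) (hb : 0 < b)
    (hF : ∀ s ∈ Ioo 0 t, ‖F s‖ ≤ K * (s ^ (a - 1) * (t - s) ^ (b - 1))) :
    ‖∫ s in Ioo 0 t, F s‖ ≤ K * t ^ (a + b - 1) * Beta a b := by
  have hkernel : IntegrableOn (fun s : ℝ => s ^ (a - 1) * (t - s) ^ (b - 1)) (Ioo 0 t) :=
    (intervalIntegrable_iff_integrableOn_Ioo_of_le ht.le).1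
      (intervalIntegrable_rpow_mul_rpow_sub ht ha hb)
  calc ‖∫ s in Ioo 0 t, F s‖
      ≤ ∫ s in Ioo 0 t, ‖F s‖ := norm_integral_le_integral_norm _
    _ ≤ ∫ s in Ioo 0 t, K * (s ^ (a - 1) * (t - s) ^ (b - 1)) :=
        integral_mono_of_nonneg (ae_of_all _ fun _ => norm_nonneg _) (hkernel.const_mul K)
          ((ae_restrict_mem measurableSet_Ioo).mono hF)
    _ = K * (t ^ (a + b - 1) * Beta a b) := by
        rw [integral_const_mul, ← integral_Ioc_eq_integral_Ioo,
          ← intervalIntegral.integral_of_le ht.le, integral_rpow_mul_rpow_sub a b ht]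
    _ = K * t ^ (a + b - 1) * Beta a b := (mul_assoc _ _ _).symm

section Scaling

variable {r : ℝ → ℝ}

lemma rpow_le_rpow_div_mul_of_scale (hr_nonneg : ∀ t ∈ Ioc (0:ℝ) 1, 0 ≤ r t)
    (hr_scale : ∀ l ∈ Ioc (0:ℝ) 1, ∀ t ∈ Ioc (0:ℝ) 1, r (l * t) ≤ Real.sqrt l * r t)
    {u t p : ℝ} (hu : 0 < u) (hut : u ≤ t) (ht : t ≤ 1) (hp : 0 ≤ p) :
    r u ^ p ≤ (u / t) ^ (p / 2) * r t ^ p := by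
  have ht0 : 0 < t := hu.trans_le hut
  have h := hr_scale (u / t) ⟨by positivity, (div_le_one ht0).2 hut⟩ t ⟨ht0, ht⟩
  rw [div_mul_cancel₀ _ ht0.ne'] at h
  calc r u ^ p ≤ (Real.sqrt (u / t) * r t) ^ p :=
        Real.rpow_le_rpow (hr_nonneg u ⟨hu, hut.trans ht⟩) h hp
    _ = (u / t) ^ (p / 2) * r t ^ p := by
        rw [Real.mul_rpow (Real.sqrt_nonneg _) (hr_nonneg t ⟨ht0, ht⟩), Real.sqrt_eq_rpow,
          ← Real.rpow_mul (by positivity)]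
        ring_nf

lemma weight_mul_weight_le (hr_nonneg : ∀ t ∈ Ioc (0:ℝ) 1, 0 ≤ r t)
    (hr_scale : ∀ l ∈ Ioc (0:ℝ) 1, ∀ t ∈ Ioc (0:ℝ) 1, r (l * t) ≤ Real.sqrt l * r t)
    {s t p q : ℝ} (hs : 0 < s) (hst : s < t) (ht : t ≤ 1) (hp : 0 ≤ p) (hq : 0 ≤ q) :
    (t - s)⁻¹ * r (t - s) ^ p * (s⁻¹ * r s ^ q)
      ≤ t ^ (-((p + q) / 2)) * r t ^ (p + q) * (s ^ (q / 2 - 1) * (t - s) ^ (p / 2 - 1)) := by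
  have ht0 : 0 < t := hs.trans hst
  have hts : 0 < t - s := sub_pos.2 hst
  have hrt : 0 ≤ r t := hr_nonneg t ⟨ht0, ht⟩
  calc (t - s)⁻¹ * r (t - s) ^ p * (s⁻¹ * r s ^ q)
      ≤ (t - s)⁻¹ * (((t - s) / t) ^ (p / 2) * r t ^ p)
          * (s⁻¹ * ((s / t) ^ (q / 2) * r t ^ q)) := by
        have hrts := hr_nonneg (t - s) ⟨hts, by linarith⟩
        have := Real.rpow_nonneg hrts p
        have := Real.rpow_nonneg (hr_nonneg s ⟨hs, hst.le.trans ht⟩) q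
        gcongr
        · exact rpow_le_rpow_div_mul_of_scale hr_nonneg hr_scale hts (by linarith) ht hp
        · exact rpow_le_rpow_div_mul_of_scale hr_nonneg hr_scale hs hst.le ht hq
    _ = t ^ (-((p + q) / 2)) * r t ^ (p + q) * (s ^ (q / 2 - 1) * (t - s) ^ (p / 2 - 1)) := by
        rw [Real.div_rpow hts.le ht0.le, Real.div_rpow hs.le ht0.le, Real.rpow_sub hs,
          Real.rpow_sub hts, Real.rpow_one, Real.rpow_one, Real.rpow_neg ht0.le, add_div,
          Real.rpow_add ht0, Real.rpow_add_of_nonneg hrt hp hq]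
        have : t ^ (p / 2) ≠ 0 := (Real.rpow_pos_of_pos ht0 _).ne'
        have : t ^ (q / 2) ≠ 0 := (Real.rpow_pos_of_pos ht0 _).ne'
        field_simp

lemma norm_integral_convolution_le {B : Type*} [NormedAddCommGroup B] [NormedSpace ℝ B]
    (hr_nonneg : ∀ t ∈ Ioc (0:ℝ) 1, 0 ≤ r t)
    (hr_scale : ∀ l ∈ Ioc (0:ℝ) 1, ∀ t ∈ Ioc (0:ℝ) 1, r (l * t) ≤ Real.sqrt l * r t)
    {C D p q : ℝ} (hC : 0 ≤ C) (hD : 0 ≤ D) (hp : 0 < p) (hq : 0 < q) {A : ℝ → B → B}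
    (hA : ∀ t ∈ Ioc (0:ℝ) 1, ∀ f : B, ‖A t f‖ ≤ C * (t⁻¹ * r t ^ p) * ‖f‖)
    {g : ℝ → B} (hg : ∀ s ∈ Ioc (0:ℝ) 1, ‖g s‖ ≤ D * (s⁻¹ * r s ^ q))
    {t : ℝ} (ht : t ∈ Ioc (0:ℝ) 1) :
    ‖∫ s in Ioo (0:ℝ) t, A (t - s) (g s)‖
      ≤ C * D * Beta (p / 2) (q / 2) * (t⁻¹ * r t ^ (p + q)) := by
  obtain ⟨ht0, ht1⟩ := ht
  have hbound := norm_setIntegral_Ioo_le_of_norm_le_kernel (a := q / 2) (b := p / 2)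
    (K := C * D * (t ^ (-((p + q) / 2)) * r t ^ (p + q))) ht0 (by positivity) (by positivity)
    fun s ⟨hs0, hst⟩ => by
      have hts : 0 < t - s := sub_pos.2 hst
      have := Real.rpow_nonneg (hr_nonneg (t - s) ⟨hts, by linarith⟩) p
      calc ‖A (t - s) (g s)‖
          ≤ C * ((t - s)⁻¹ * r (t - s) ^ p) * ‖g s‖ := hA _ ⟨hts, by linarith⟩ _
        _ ≤ C * ((t - s)⁻¹ * r (t - s) ^ p) * (D * (s⁻¹ * r s ^ q)) := by
            gcongr
            exact hg s ⟨hs0, by linarith⟩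
        _ = C * D * ((t - s)⁻¹ * r (t - s) ^ p * (s⁻¹ * r s ^ q)) := by ring
        _ ≤ C * D * (t ^ (-((p + q) / 2)) * r t ^ (p + q)
              * (s ^ (q / 2 - 1) * (t - s) ^ (p / 2 - 1))) := by
            gcongr C * D * ?_
            exact weight_mul_weight_le hr_nonneg hr_scale hs0 hst ht1 hp.le hq.le
        _ = _ := by ring
  calc _ ≤ _ := hbound
    _ = C * D * Beta (p / 2) (q / 2)
          * (t ^ (-((p + q) / 2)) * t ^ (q / 2 + p / 2 - 1) * r t ^ (p + q)) := by
        rw [Beta_comm]; ring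
    _ = C * D * Beta (p / 2) (q / 2) * (t⁻¹ * r t ^ (p + q)) := by
        rw [← Real.rpow_add ht0, show -((p + q) / 2) + (q / 2 + p / 2 - 1) = -1 by ring,
          Real.rpow_neg_one]

end Scaling

theorem stmt3_general {B : Type*} [NormedAddCommGroup B] [NormedSpace ℝ B]
    (r : ℝ → ℝ)
    (hr_nonneg : ∀ t ∈ Ioc (0:ℝ) 1, 0 ≤ r t)
    (hr_scale : ∀ l ∈ Ioc (0:ℝ) 1, ∀ t ∈ Ioc (0:ℝ) 1, r (l * t) ≤ Real.sqrt l * r t)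
    (C3 ε0 : ℝ) (hC3 : 0 < C3) (hε0 : 0 < ε0)
    (Q0 : ℝ → B →ₗ[ℝ] B)
    (hQ0 : ∀ t ∈ Ioc (0:ℝ) 1, ∀ f : B, ‖Q0 t f‖ ≤ C3 * (t⁻¹ * r t ^ ε0) * ‖f‖)
    (Q : ℕ → ℝ → B → B)
    (hQzero : ∀ t f, Q 0 t f = Q0 t f)
    (hQsucc : ∀ n : ℕ, ∀ t : ℝ, ∀ f : B,
      Q (n + 1) t f = ∫ s in Ioo (0:ℝ) t, Q0 (t - s) (Q n s f))
    (n : ℕ) (t : ℝ) (ht : t ∈ Ioc (0:ℝ) 1) (f : B) :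
    ‖Q n t f‖ ≤ C3 ^ (n + 1) * (∏ k ∈ Finset.Icc 1 n, Beta (ε0 / 2) ((k : ℝ) * ε0 / 2))
      * (t⁻¹ * r t ^ (((n : ℝ) + 1) * ε0)) * ‖f‖ := by
  induction n generalizing t with
  | zero => simpa [hQzero] using hQ0 t ht f
  | succ n ih =>
    set P := ∏ k ∈ Finset.Icc 1 n, Beta (ε0 / 2) ((k : ℝ) * ε0 / 2)
    have hP : 0 ≤ P := Finset.prod_nonneg fun k _ => Beta_nonneg _ _
    have hstep := norm_integral_convolution_le (A := fun t => Q0 t) (g := fun s => Q n s f)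
      (D := C3 ^ (n + 1) * P * ‖f‖) (q := ((n : ℝ) + 1) * ε0) hr_nonneg hr_scale hC3.le
      (by positivity) hε0 (by positivity) hQ0 (fun s hs => (ih s hs).trans_eq (by ring)) ht
    rw [hQsucc, Finset.prod_Icc_succ_top (by omega), pow_succ']
    refine hstep.trans_eq ?_
    rw [show ε0 + ((n : ℝ) + 1) * ε0 = (((n + 1 : ℕ) : ℝ) + 1) * ε0 by push_cast; ring]
    push_cast
    ring

/-- with `Q⁰_t` bounded operators on a Banach space `B` satisfying
`‖Q⁰_t f‖ ≤ C₃ t⁻¹ r_t^{ε₀} ‖f‖`, and `Qⁿ_t f = ∫₀ᵗ Q⁰_{t-s} Q^{n-1}_s f ds`, one has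
`‖Qⁿ_t f‖ ≤ C₃^{n+1} ∏_{k=1}^n B(ε₀/2, kε₀/2) · t⁻¹ r_t^{(n+1)ε₀} ‖f‖`. -/
theorem stmt3 {B : Type*} [NormedAddCommGroup B] [NormedSpace ℝ B] [CompleteSpace B]
    (r : ℝ → ℝ)
    (hr_nonneg : ∀ t ∈ Ioc (0:ℝ) 1, 0 ≤ r t)
    (hr_mono : ∀ s ∈ Ioc (0:ℝ) 1, ∀ t ∈ Ioc (0:ℝ) 1, s ≤ t → r s ≤ r t)
    (hr_scale : ∀ l ∈ Ioc (0:ℝ) 1, ∀ t ∈ Ioc (0:ℝ) 1, r (l * t) ≤ Real.sqrt l * r t)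
    (C3 ε0 : ℝ) (hC3 : 0 < C3) (hε0 : 0 < ε0)
    (Q0 : ℝ → B →ₗ[ℝ] B)
    (hQ0 : ∀ t ∈ Ioc (0:ℝ) 1, ∀ f : B, ‖Q0 t f‖ ≤ C3 * (t⁻¹ * r t ^ ε0) * ‖f‖)
    (hQ0cont : ∀ f : B, ContinuousOn (fun t => Q0 t f) (Ioc (0:ℝ) 1))
    (Q : ℕ → ℝ → B → B)
    (hQzero : ∀ t f, Q 0 t f = Q0 t f)
    (hQsucc : ∀ n : ℕ, ∀ t : ℝ, ∀ f : B,
      Q (n + 1) t f = ∫ s in Ioo (0:ℝ) t, Q0 (t - s) (Q n s f))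
    (n : ℕ) (t : ℝ) (ht : t ∈ Ioc (0:ℝ) 1) (f : B) :
    ‖Q n t f‖ ≤ C3 ^ (n + 1) * (∏ k ∈ Finset.Icc 1 n, Beta (ε0 / 2) ((k : ℝ) * ε0 / 2))
      * (t⁻¹ * r t ^ (((n : ℝ) + 1) * ε0)) * ‖f‖ :=
  stmt3_general r hr_nonneg hr_scale C3 ε0 hC3 hε0 Q0 hQ0 Q hQzero hQsucc n t ht f
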